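/- arXiv:2402.10357 — 3 statements merged into one kernel-verified Lean document; each statement's English description precedes it below -/
import Mathlib

section
/- (Comparison ODE with linear forcing) Let C > 0 and D, E ≥ 0 and let a, b : [0,∞) → [0,∞) be differentiable functions satisfying a'(t) = b(t) and b'(t) ≤ C·a(t) + D·t + E for all t ≥ 0, with a(0) = b(0) = 0. Then for all t ≥ 0: a(t) ≤ (E/C)·cosh(√C t) + (D/C^{3/2})·sinh(√C t) − (D/C)·t − (E/C), and b(t) ≤ (E/√C)·sinh(√C t) + (D/C)·cosh(√C t) − D/C. -/
/-- If `f 0 = 0` and `f` has nonnegative derivative on `[0,∞)`, then `f ≥ 0` there. -/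
lemma nonneg_of_deriv_nonneg_aux (f f' : ℝ → ℝ)
    (hf : ∀ x, 0 ≤ x → HasDerivAt f (f' x) x) (h0 : f 0 = 0)
    (hf' : ∀ x, 0 ≤ x → 0 ≤ f' x) : ∀ t, 0 ≤ t → 0 ≤ f t := by
  have hmono : MonotoneOn f (Set.Ici (0:ℝ)) := by
    apply monotoneOn_of_deriv_nonneg (convex_Ici 0)
    · exact fun x hx => ((hf x hx).differentiableAt).continuousAt.continuousWithinAt
    · intro x hx
      rw [interior_Ici] at hx
      exact ((hf x (le_of_lt hx)).differentiableAt).differentiableWithinAt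
    · intro x hx
      rw [interior_Ici] at hx
      rw [(hf x (le_of_lt hx)).deriv]
      exact hf' x (le_of_lt hx)
  intro t ht
  have := hmono (Set.self_mem_Ici) (Set.mem_Ici.mpr ht) ht
  linarith [this]

/-- Comparison ODE with linear forcing: if `a' = b` and `b' ≤ C·a + D·t + E` on `[0,∞)`
with `a(0) = b(0) = 0`, then `a` and `b` are dominated by the corresponding hyperbolic
solutions of the forced equation. -/
theorem sinh_ode_comparison_with_offset (C D E : ℝ) (hC : 0 < C) (hD : 0 ≤ D) (hE : 0 ≤ E)
    (a b b' : ℝ → ℝ)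
    (ha_nonneg : ∀ t, 0 ≤ t → 0 ≤ a t) (hb_nonneg : ∀ t, 0 ≤ t → 0 ≤ b t)
    (ha0 : a 0 = 0) (hb0 : b 0 = 0)
    (hab : ∀ t, 0 ≤ t → HasDerivAt a (b t) t)
    (hb : ∀ t, 0 ≤ t → HasDerivAt b (b' t) t)
    (hb' : ∀ t, 0 ≤ t → b' t ≤ C * a t + D * t + E)
    (t : ℝ) (ht : 0 ≤ t) :
    a t ≤ (E / C) * Real.cosh (Real.sqrt C * t) +
        (D / (C * Real.sqrt C)) * Real.sinh (Real.sqrt C * t) - (D / C) * t - E / C ∧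
      b t ≤ (E / Real.sqrt C) * Real.sinh (Real.sqrt C * t) +
        (D / C) * Real.cosh (Real.sqrt C * t) - D / C := by
  set s := Real.sqrt C with hs_def
  have hs : 0 < s := Real.sqrt_pos.mpr hC
  have hs2 : s * s = C := Real.mul_self_sqrt hC.le
  set A : ℝ → ℝ := fun x => E / C * Real.cosh (s * x) + D / (C * s) * Real.sinh (s * x)
      - D / C * x - E / C with hA_def
  set B : ℝ → ℝ := fun x => E / s * Real.sinh (s * x) + D / C * Real.cosh (s * x) - D / C
      with hB_def
  -- derivative building blocks
  have hlin : ∀ x : ℝ, HasDerivAt (fun y => s * y) s x := by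
    intro x
    simpa using (hasDerivAt_id x).const_mul s
  have hcosh : ∀ x : ℝ, HasDerivAt (fun y => Real.cosh (s * y)) (s * Real.sinh (s * x)) x := by
    intro x
    simpa [Function.comp_def, mul_comm] using (Real.hasDerivAt_cosh (s * x)).comp x (hlin x)
  have hsinh : ∀ x : ℝ, HasDerivAt (fun y => Real.sinh (s * y)) (s * Real.cosh (s * x)) x := by
    intro x
    simpa [Function.comp_def, mul_comm] using (Real.hasDerivAt_sinh (s * x)).comp x (hlin x)
  have hA : ∀ x : ℝ, HasDerivAt A (B x) x := by
    intro x
    have h1 : HasDerivAt A (E / C * (s * Real.sinh (s * x)) + D / (C * s) * (s * Real.cosh (s * x))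
        - D / C * 1 - 0) x := by
      exact ((((hcosh x).const_mul (E / C)).add ((hsinh x).const_mul (D / (C * s)))).sub
        ((hasDerivAt_id x).const_mul (D / C))).sub (hasDerivAt_const x (E / C))
    convert h1 using 1
    rw [hB_def]
    rw [← hs2]
    field_simp
    ring
  have hB' : ∀ x : ℝ, HasDerivAt B (C * A x + D * x + E) x := by
    intro x
    have h1 : HasDerivAt B (E / s * (s * Real.cosh (s * x)) + D / C * (s * Real.sinh (s * x))
        - 0) x :=
      (((hsinh x).const_mul (E / s)).add ((hcosh x).const_mul (D / C))).sub
        (hasDerivAt_const x (D / C))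
    convert h1 using 1
    rw [hA_def]
    rw [← hs2]
    field_simp
    ring
  have hA0 : A 0 = 0 := by simp [hA_def]
  have hB0 : B 0 = 0 := by simp [hB_def]
  -- u = A - a, v = B - b
  set u : ℝ → ℝ := fun x => A x - a x with hu_def
  set v : ℝ → ℝ := fun x => B x - b x with hv_def
  -- Step 1: v + s*u ≥ 0 via φ = exp(-(s x)) * (v x + s * u x)
  have step1 : ∀ x, 0 ≤ x → 0 ≤ v x + s * u x := by
    have key : ∀ x, 0 ≤ x → 0 ≤ Real.exp (-(s * x)) * (v x + s * u x) := by
      apply nonneg_of_deriv_nonneg_aux _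
        (fun x => Real.exp (-(s * x)) * (C * a x + D * x + E - b' x))
      · intro x hx
        have hv' : HasDerivAt v (C * A x + D * x + E - b' x) x := (hB' x).sub (hb x hx)
        have hu' : HasDerivAt u (v x) x := by
          have := (hA x).sub (hab x hx)
          exact this
        have hexp : HasDerivAt (fun y => Real.exp (-(s * y))) (-s * Real.exp (-(s * x))) x := by
          have h := (Real.hasDerivAt_exp (-(s * x))).comp x (((hlin x).neg))
          rw [show (-s * Real.exp (-(s * x))) = Real.exp (-(s * x)) * -s by ring]
          exact h
        have hmul := hexp.mul (hv'.add (hu'.const_mul s))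
        refine hmul.congr_deriv ?_
        simp only [hu_def, hv_def, Pi.add_apply]
        rw [← hs2]
        ring
      · simp [hu_def, hv_def, hA0, hB0, ha0, hb0]
      · intro x hx
        have h1 := hb' x hx
        have h2 : 0 ≤ C * a x + D * x + E - b' x := by linarith
        positivity
    intro x hx
    have h := key x hx
    have hepos := Real.exp_pos (-(s * x))
    nlinarith [h, hepos]
  -- Step 2: u ≥ 0 via ψ = exp (s x) * u x
  have step2 : ∀ x, 0 ≤ x → 0 ≤ u x := by
    have key : ∀ x, 0 ≤ x → 0 ≤ Real.exp (s * x) * u x := by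
      apply nonneg_of_deriv_nonneg_aux _ (fun x => Real.exp (s * x) * (v x + s * u x))
      · intro x hx
        have hu' : HasDerivAt u (v x) x := by
          have := (hA x).sub (hab x hx)
          exact this
        have hexp : HasDerivAt (fun y => Real.exp (s * y)) (s * Real.exp (s * x)) x := by
          have h := (Real.hasDerivAt_exp (s * x)).comp x (hlin x)
          simpa [Function.comp_def, mul_comm] using h
        have hmul := hexp.mul hu'
        refine hmul.congr_deriv ?_
        ring
      · simp [hu_def, hA0, ha0]
      · intro x hx
        have := step1 x hx
        positivity
    intro x hx
    have h := key x hx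
    have hepos := Real.exp_pos (s * x)
    nlinarith [h, hepos]
  -- Step 3: v ≥ 0 since v' ≥ C u ≥ 0
  have step3 : ∀ x, 0 ≤ x → 0 ≤ v x := by
    apply nonneg_of_deriv_nonneg_aux _ (fun x => C * A x + D * x + E - b' x)
    · intro x hx
      exact (hB' x).sub (hb x hx)
    · simp [hv_def, hB0, hb0]
    · intro x hx
      have h1 := hb' x hx
      have h2 := step2 x hx
      simp only [hu_def] at h2
      nlinarith
  constructor
  · have := step2 t ht
    simp only [hu_def, hA_def] at this
    linarith
  · have := step3 t ht
    simp only [hv_def, hB_def] at this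
    linarith
end

section
/- (Block bounds for the fundamental solution of a second-order linear ODE system) Let M : [0,∞) → ℝ^{d×d} be continuous with ‖M(t)‖₂ ≤ L for all t, and let Φ(t) ∈ ℝ^{2d×2d} be the solution of Φ(0) = I, Φ'(t) = [[0, I],[M(t), 0]]·Φ(t). Write Φ(t) in block form [[A(t), B(t)],[C(t), D(t)]] with d×d blocks. Then for all t ≥ 0: ‖A(t)‖₂ ≤ cosh(√L t), ‖B(t)‖₂ ≤ sinh(√L t)/√L, ‖C(t)‖₂ ≤ √L·sinh(√L t), and ‖D(t)‖₂ ≤ cosh(√L t). -/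
open Real Set Filter Topology

/-- Right-slope frequently-below lemma for `‖P‖ + c‖Q‖ - g`. -/
lemma freq_slope_aux {E : Type*} [NormedAddCommGroup E] [NormedSpace ℝ E]
    {P Q : ℝ → E} {P' Q' : E} {g : ℝ → ℝ} {g' : ℝ} {c : ℝ} (hc : 0 ≤ c) {x : ℝ}
    (hP : HasDerivWithinAt P P' (Ici x) x) (hQ : HasDerivWithinAt Q Q' (Ici x) x)
    (hg : HasDerivAt g g' x) (r : ℝ) (hr : ‖P'‖ + c * ‖Q'‖ - g' < r) :
    ∃ᶠ z in 𝓝[>] x,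
      (z - x)⁻¹ * ((‖P z‖ + c * ‖Q z‖ - g z) - (‖P x‖ + c * ‖Q x‖ - g x)) < r := by
  have hle : 𝓝[>] x ≤ 𝓝[Ici x \ {x}] x :=
    nhdsWithin_mono x (fun z hz => ⟨Set.mem_Ici.mpr (le_of_lt (Set.mem_Ioi.mp hz)), ne_of_gt hz⟩)
  have hle' : 𝓝[>] x ≤ 𝓝[{x}ᶜ] x :=
    nhdsWithin_mono x (fun z hz => ne_of_gt hz)
  have hP' : Tendsto (fun z => ‖slope P x z‖) (𝓝[>] x) (𝓝 ‖P'‖) :=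
    (((hasDerivWithinAt_iff_tendsto_slope.mp hP).mono_left hle).norm)
  have hQ' : Tendsto (fun z => ‖slope Q x z‖) (𝓝[>] x) (𝓝 ‖Q'‖) :=
    (((hasDerivWithinAt_iff_tendsto_slope.mp hQ).mono_left hle).norm)
  have hg' : Tendsto (slope g x) (𝓝[>] x) (𝓝 g') :=
    ((hasDerivAt_iff_tendsto_slope.mp hg).mono_left hle')
  have htend : Tendsto (fun z => ‖slope P x z‖ + c * ‖slope Q x z‖ - slope g x z)
      (𝓝[>] x) (𝓝 (‖P'‖ + c * ‖Q'‖ - g')) :=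
    (hP'.add (hQ'.const_mul c)).sub hg'
  have hev : ∀ᶠ z in 𝓝[>] x,
      ‖slope P x z‖ + c * ‖slope Q x z‖ - slope g x z < r :=
    htend.eventually (Filter.Tendsto.eventually_lt_const hr tendsto_id) |>.mono (fun z hz => hz)
  have hmem : ∀ᶠ z in 𝓝[>] x, z ∈ Ioi x := self_mem_nhdsWithin
  refine ((hev.and hmem).mono ?_).frequently
  rintro z ⟨hz, hzx⟩
  have hxz : 0 < z - x := sub_pos.mpr hzx
  have hinv : 0 ≤ (z - x)⁻¹ := inv_nonneg.mpr hxz.le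
  have e1 : (z - x)⁻¹ * (‖P z‖ - ‖P x‖) ≤ ‖slope P x z‖ := by
    rw [slope_def_module, norm_smul, norm_inv, Real.norm_eq_abs, abs_of_pos hxz]
    exact mul_le_mul_of_nonneg_left ((norm_sub_norm_le _ _).trans (le_refl _)) hinv
  have e2 : (z - x)⁻¹ * (‖Q z‖ - ‖Q x‖) ≤ ‖slope Q x z‖ := by
    rw [slope_def_module, norm_smul, norm_inv, Real.norm_eq_abs, abs_of_pos hxz]
    exact mul_le_mul_of_nonneg_left ((norm_sub_norm_le _ _).trans (le_refl _)) hinv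
  have e3 : slope g x z = (z - x)⁻¹ * (g z - g x) := by
    rw [slope_def_module]; simp [smul_eq_mul]
  calc (z - x)⁻¹ * ((‖P z‖ + c * ‖Q z‖ - g z) - (‖P x‖ + c * ‖Q x‖ - g x))
      = (z - x)⁻¹ * (‖P z‖ - ‖P x‖) + c * ((z - x)⁻¹ * (‖Q z‖ - ‖Q x‖))
        - (z - x)⁻¹ * (g z - g x) := by ring
    _ ≤ ‖slope P x z‖ + c * ‖slope Q x z‖ - slope g x z := by
        rw [e3]; gcongr
    _ < r := hz

/-- Grönwall-type: if `f = ‖P‖ + c‖Q‖ - g` starts `≤ 0` and its right-derivative bound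
satisfies `f' ≤ K f`, then `f ≤ 0`. -/
lemma gron_le_zero {E : Type*} [NormedAddCommGroup E] [NormedSpace ℝ E]
    {b : ℝ} {P Q : ℝ → E} {P' Q' : ℝ → E} {c K : ℝ} (hc : 0 ≤ c) {g g' : ℝ → ℝ}
    (hP : ∀ x ∈ Ico 0 b, HasDerivWithinAt P (P' x) (Ici x) x)
    (hQ : ∀ x ∈ Ico 0 b, HasDerivWithinAt Q (Q' x) (Ici x) x)
    (hPc : ContinuousOn P (Icc 0 b)) (hQc : ContinuousOn Q (Icc 0 b))
    (hg : ∀ x, HasDerivAt g (g' x) x)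
    (h0 : ‖P 0‖ + c * ‖Q 0‖ - g 0 ≤ 0)
    (hbound : ∀ x ∈ Ico 0 b,
      ‖P' x‖ + c * ‖Q' x‖ - g' x ≤ K * (‖P x‖ + c * ‖Q x‖ - g x)) :
    ∀ x ∈ Icc 0 b, ‖P x‖ + c * ‖Q x‖ - g x ≤ 0 := by
  have hgc : Continuous g := by
    refine continuous_iff_continuousAt.mpr fun x => (hg x).continuousAt
  have hcont : ContinuousOn (fun x => ‖P x‖ + c * ‖Q x‖ - g x) (Icc 0 b) :=
    ((hPc.norm.add (continuousOn_const.mul hQc.norm)).sub hgc.continuousOn)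
  have := le_gronwallBound_of_liminf_deriv_right_le (f := fun x => ‖P x‖ + c * ‖Q x‖ - g x)
    (f' := fun x => ‖P' x‖ + c * ‖Q' x‖ - g' x) (δ := 0) (K := K) (ε := 0)
    hcont
    (fun x hx r hr => freq_slope_aux hc (hP x hx) (hQ x hx) (hg x) r hr)
    h0
    (fun x hx => by simpa using hbound x hx)
  intro x hx
  have h := this x hx
  rwa [gronwallBound_ε0, zero_mul] at h


set_option maxHeartbeats 1000000 in
/-- Block bounds for the fundamental solution `Φ = [[A,B],[C,D]]` of the second-order
linear system `Φ' = [[0,I],[M(t),0]] Φ`, `Φ(0) = I`, when `‖M(t)‖ ≤ L`: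
`‖A(t)‖ ≤ cosh(√L t)`, `‖B(t)‖ ≤ sinh(√L t)/√L`, `‖C(t)‖ ≤ √L sinh(√L t)`,
`‖D(t)‖ ≤ cosh(√L t)`. -/
theorem matrix_exponent_block_bounds (d : ℕ) (L : ℝ) (hL : 0 < L)
    (M : ℝ → EuclideanSpace ℝ (Fin d) →L[ℝ] EuclideanSpace ℝ (Fin d))
    (hMcont : Continuous M) (hM : ∀ t, 0 ≤ t → ‖M t‖ ≤ L)
    (A B C D : ℝ → EuclideanSpace ℝ (Fin d) →L[ℝ] EuclideanSpace ℝ (Fin d))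
    (hA0 : A 0 = ContinuousLinearMap.id ℝ (EuclideanSpace ℝ (Fin d)))
    (hB0 : B 0 = 0) (hC0 : C 0 = 0)
    (hD0 : D 0 = ContinuousLinearMap.id ℝ (EuclideanSpace ℝ (Fin d)))
    (hA : ∀ t, 0 ≤ t → HasDerivAt A (C t) t)
    (hB : ∀ t, 0 ≤ t → HasDerivAt B (D t) t)
    (hC : ∀ t, 0 ≤ t → HasDerivAt C ((M t).comp (A t)) t)
    (hD : ∀ t, 0 ≤ t → HasDerivAt D ((M t).comp (B t)) t)
    (t : ℝ) (ht : 0 ≤ t) :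
    ‖A t‖ ≤ Real.cosh (Real.sqrt L * t) ∧
      ‖B t‖ ≤ Real.sinh (Real.sqrt L * t) / Real.sqrt L ∧
      ‖C t‖ ≤ Real.sqrt L * Real.sinh (Real.sqrt L * t) ∧
      ‖D t‖ ≤ Real.cosh (Real.sqrt L * t) := by
  set s : ℝ := Real.sqrt L with hs_def
  have hs : 0 < s := Real.sqrt_pos.mpr hL
  have hLs : L = s * s := (Real.mul_self_sqrt hL.le).symm
  have hsi : s * s⁻¹ = 1 := mul_inv_cancel₀ hs.ne'
  have hsinv : 0 ≤ s⁻¹ := inv_nonneg.mpr hs.le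
  have hdsinh : ∀ x : ℝ, HasDerivAt (fun y => Real.sinh (s * y)) (s * Real.cosh (s * x)) x := by
    intro x
    have h := ((hasDerivAt_id x).const_mul s).sinh
    simpa [mul_comm] using h
  have hdcosh : ∀ x : ℝ, HasDerivAt (fun y => Real.cosh (s * y)) (s * Real.sinh (s * x)) x := by
    intro x
    have h := ((hasDerivAt_id x).const_mul s).cosh
    simpa [mul_comm] using h
  have hAW : ∀ x ∈ Set.Ico (0:ℝ) t, HasDerivWithinAt A (C x) (Set.Ici x) x :=
    fun x hx => (hA x hx.1).hasDerivWithinAt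
  have hBW : ∀ x ∈ Set.Ico (0:ℝ) t, HasDerivWithinAt B (D x) (Set.Ici x) x :=
    fun x hx => (hB x hx.1).hasDerivWithinAt
  have hCW : ∀ x ∈ Set.Ico (0:ℝ) t, HasDerivWithinAt C ((M x).comp (A x)) (Set.Ici x) x :=
    fun x hx => (hC x hx.1).hasDerivWithinAt
  have hDW : ∀ x ∈ Set.Ico (0:ℝ) t, HasDerivWithinAt D ((M x).comp (B x)) (Set.Ici x) x :=
    fun x hx => (hD x hx.1).hasDerivWithinAt
  have hAc : ContinuousOn A (Set.Icc 0 t) :=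
    fun x hx => ((hA x hx.1).continuousAt).continuousWithinAt
  have hBc : ContinuousOn B (Set.Icc 0 t) :=
    fun x hx => ((hB x hx.1).continuousAt).continuousWithinAt
  have hCc : ContinuousOn C (Set.Icc 0 t) :=
    fun x hx => ((hC x hx.1).continuousAt).continuousWithinAt
  have hDc : ContinuousOn D (Set.Icc 0 t) :=
    fun x hx => ((hD x hx.1).continuousAt).continuousWithinAt
  have hA0n : ‖A 0‖ ≤ 1 := by rw [hA0]; exact ContinuousLinearMap.norm_id_le
  have hD0n : ‖D 0‖ ≤ 1 := by rw [hD0]; exact ContinuousLinearMap.norm_id_le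
  have hC0n : ‖C 0‖ = 0 := by rw [hC0]; exact norm_zero
  have hB0n : ‖B 0‖ = 0 := by rw [hB0]; exact norm_zero
  have hMA : ∀ x ∈ Set.Ico (0:ℝ) t, ‖(M x).comp (A x)‖ ≤ L * ‖A x‖ := fun x hx =>
    (ContinuousLinearMap.opNorm_comp_le _ _).trans
      (mul_le_mul_of_nonneg_right (hM x hx.1) (norm_nonneg _))
  have hMB : ∀ x ∈ Set.Ico (0:ℝ) t, ‖(M x).comp (B x)‖ ≤ L * ‖B x‖ := fun x hx =>
    (ContinuousLinearMap.opNorm_comp_le _ _).trans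
      (mul_le_mul_of_nonneg_right (hM x hx.1) (norm_nonneg _))
  have hinvL : ∀ a : ℝ, s⁻¹ * (L * a) = s * a := by
    intro a; rw [hLs, show s * s * a = s * (s * a) by ring, inv_mul_cancel_left₀ hs.ne']
  -- Step 1 (A,C)
  have step1 : ∀ x ∈ Set.Icc (0:ℝ) t,
      ‖A x‖ + s⁻¹ * ‖C x‖ - (Real.cosh (s * x) + Real.sinh (s * x)) ≤ 0 := by
    refine gron_le_zero (K := s) hsinv hAW hCW hAc hCc
      (g' := fun x => s * Real.sinh (s * x) + s * Real.cosh (s * x))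
      (fun x => (hdcosh x).add (hdsinh x)) ?_ ?_
    · rw [hC0n]
      simp only [mul_zero, Real.cosh_zero, Real.sinh_zero]
      linarith
    · intro x hx
      have h1 : s⁻¹ * ‖(M x).comp (A x)‖ ≤ s * ‖A x‖ := by
        calc s⁻¹ * ‖(M x).comp (A x)‖ ≤ s⁻¹ * (L * ‖A x‖) :=
              mul_le_mul_of_nonneg_left (hMA x hx) hsinv
          _ = s * ‖A x‖ := hinvL _
      have h2 : s * (s⁻¹ * ‖C x‖) = ‖C x‖ := by rw [← mul_assoc, hsi, one_mul]
      nlinarith [h1, h2]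
  -- Step 2: ‖A‖ ≤ cosh
  have step2 : ∀ x ∈ Set.Icc (0:ℝ) t, ‖A x‖ + 0 * ‖A x‖ - Real.cosh (s * x) ≤ 0 := by
    refine gron_le_zero (K := -s) le_rfl hAW hAW hAc hAc
      (g' := fun x => s * Real.sinh (s * x)) (fun x => hdcosh x) ?_ ?_
    · simp only [zero_mul, add_zero, mul_zero, Real.cosh_zero]
      linarith
    · intro x hx
      have h1 := step1 x ⟨hx.1, hx.2.le⟩
      have h2 : s * (s⁻¹ * ‖C x‖) = ‖C x‖ := by rw [← mul_assoc, hsi, one_mul]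
      nlinarith [h1, h2, hs.le]
  -- Step 3: ‖C‖ ≤ s sinh
  have step3 : ∀ x ∈ Set.Icc (0:ℝ) t, ‖C x‖ + 0 * ‖C x‖ - s * Real.sinh (s * x) ≤ 0 := by
    refine gron_le_zero (K := 0) le_rfl hCW hCW hCc hCc
      (g := fun x => s * Real.sinh (s * x))
      (g' := fun x => s * (s * Real.cosh (s * x)))
      (fun x => (hdsinh x).const_mul s) ?_ ?_
    · rw [hC0n]
      simp only [mul_zero, zero_mul, Real.sinh_zero, add_zero, sub_zero]
      linarith
    · intro x hx
      have h1 := hMA x hx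
      have h2 := step2 x ⟨hx.1, hx.2.le⟩
      nlinarith [h1, h2, hL.le, norm_nonneg (A x)]
  -- Step 1' (B,D)
  have step1' : ∀ x ∈ Set.Icc (0:ℝ) t,
      ‖B x‖ + s⁻¹ * ‖D x‖ - (s⁻¹ * Real.sinh (s * x) + s⁻¹ * Real.cosh (s * x)) ≤ 0 := by
    refine gron_le_zero (K := s) hsinv hBW hDW hBc hDc
      (g' := fun x => s⁻¹ * (s * Real.cosh (s * x)) + s⁻¹ * (s * Real.sinh (s * x)))
      (fun x => ((hdsinh x).const_mul s⁻¹).add ((hdcosh x).const_mul s⁻¹)) ?_ ?_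
    · rw [hB0n]
      simp only [mul_zero, Real.cosh_zero, Real.sinh_zero]
      have := mul_le_mul_of_nonneg_left hD0n hsinv
      linarith
    · intro x hx
      have h1 : s⁻¹ * ‖(M x).comp (B x)‖ ≤ s * ‖B x‖ := by
        calc s⁻¹ * ‖(M x).comp (B x)‖ ≤ s⁻¹ * (L * ‖B x‖) :=
              mul_le_mul_of_nonneg_left (hMB x hx) hsinv
          _ = s * ‖B x‖ := hinvL _
      have h2 : s * (s⁻¹ * ‖D x‖) = ‖D x‖ := by rw [← mul_assoc, hsi, one_mul]
      have h3 : s⁻¹ * (s * Real.cosh (s * x)) = Real.cosh (s * x) := by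
        rw [inv_mul_cancel_left₀ hs.ne']
      have h4 : s⁻¹ * (s * Real.sinh (s * x)) = Real.sinh (s * x) := by
        rw [inv_mul_cancel_left₀ hs.ne']
      have h5 : s * (s⁻¹ * Real.cosh (s * x)) = Real.cosh (s * x) := by
        rw [← mul_assoc, hsi, one_mul]
      have h6 : s * (s⁻¹ * Real.sinh (s * x)) = Real.sinh (s * x) := by
        rw [← mul_assoc, hsi, one_mul]
      nlinarith [h1, h2, h3, h4, h5, h6]
  -- Step 2': ‖B‖ ≤ sinh / s
  have step2' : ∀ x ∈ Set.Icc (0:ℝ) t,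
      ‖B x‖ + 0 * ‖B x‖ - s⁻¹ * Real.sinh (s * x) ≤ 0 := by
    refine gron_le_zero (K := -s) le_rfl hBW hBW hBc hBc
      (g' := fun x => s⁻¹ * (s * Real.cosh (s * x)))
      (fun x => (hdsinh x).const_mul s⁻¹) ?_ ?_
    · rw [hB0n]
      simp only [mul_zero, zero_mul, Real.sinh_zero, add_zero, sub_zero]
      linarith
    · intro x hx
      have h1 := step1' x ⟨hx.1, hx.2.le⟩
      have h2 : s * (s⁻¹ * ‖D x‖) = ‖D x‖ := by rw [← mul_assoc, hsi, one_mul]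
      have h3 : s⁻¹ * (s * Real.cosh (s * x)) = Real.cosh (s * x) := by
        rw [inv_mul_cancel_left₀ hs.ne']
      have h5 : s * (s⁻¹ * Real.cosh (s * x)) = Real.cosh (s * x) := by
        rw [← mul_assoc, hsi, one_mul]
      have h6 : s * (s⁻¹ * Real.sinh (s * x)) = Real.sinh (s * x) := by
        rw [← mul_assoc, hsi, one_mul]
      nlinarith [h1, h2, h3, h5, h6, hs.le]
  -- Step 3': ‖D‖ ≤ cosh
  have step3' : ∀ x ∈ Set.Icc (0:ℝ) t, ‖D x‖ + 0 * ‖D x‖ - Real.cosh (s * x) ≤ 0 := by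
    refine gron_le_zero (K := 0) le_rfl hDW hDW hDc hDc
      (g' := fun x => s * Real.sinh (s * x)) (fun x => hdcosh x) ?_ ?_
    · simp only [zero_mul, add_zero, mul_zero, Real.cosh_zero]
      linarith
    · intro x hx
      have h1 := hMB x hx
      have h2 := step2' x ⟨hx.1, hx.2.le⟩
      have h3 : L * (s⁻¹ * Real.sinh (s * x)) = s * Real.sinh (s * x) := by
        rw [hLs, mul_assoc, ← mul_assoc s s⁻¹, hsi, one_mul]
      nlinarith [h1, h2, h3, hL.le, norm_nonneg (B x)]
  have htt : t ∈ Set.Icc (0:ℝ) t := ⟨ht, le_rfl⟩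
  have r1 := step2 t htt
  have r2 := step2' t htt
  have r3 := step3 t htt
  have r4 := step3' t htt
  refine ⟨by linarith, ?_, by linarith, by linarith⟩
  rw [div_eq_inv_mul]
  linarith
end

section
/- (First-order Taylor bounds for the fundamental solution blocks) In the setting of the previous block-bound lemma, additionally: ‖A(t) − I‖₂ ≤ cosh(√L t) − 1, ‖B(t) − tI‖₂ ≤ sinh(√L t)/√L − t, and ‖D(t) − I‖₂ ≤ cosh(√L t) − 1, for all t ≥ 0. -/
open Real MeasureTheory intervalIntegral

lemma aux_ftc (f : ℝ → ℝ) (hf : Continuous f) (t : ℝ) :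
    HasDerivAt (fun u => ∫ s in (0:ℝ)..u, f s) (f t) t :=
  intervalIntegral.integral_hasDerivAt_right (hf.intervalIntegrable _ _)
    (hf.stronglyMeasurableAtFilter _ _) hf.continuousAt

lemma aux_prim_cont (f : ℝ → ℝ) (hf : Continuous f) :
    Continuous fun u => ∫ s in (0:ℝ)..u, f s :=
  Differentiable.continuous fun u => (aux_ftc f hf u).differentiableAt

lemma aux_mono (f f' : ℝ → ℝ) (hf : ∀ t, HasDerivAt f (f' t) t)
    (h : ∀ t, 0 ≤ t → 0 ≤ f' t) : ∀ t, 0 ≤ t → f 0 ≤ f t := by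
  intro t ht
  have hmono : MonotoneOn f (Set.Ici (0:ℝ)) := by
    apply monotoneOn_of_deriv_nonneg (convex_Ici 0)
      (fun x _ => (hf x).continuousAt.continuousWithinAt)
      (fun x _ => (hf x).differentiableAt.differentiableWithinAt)
    intro x hx
    rw [interior_Ici] at hx
    rw [(hf x).deriv]
    exact h x (le_of_lt hx)
  exact hmono Set.self_mem_Ici ht ht

lemma aux_mp (K : ℝ) (w w' w'' : ℝ → ℝ)
    (hw : ∀ t, HasDerivAt w (w' t) t) (hw' : ∀ t, HasDerivAt w' (w'' t) t)
    (h0 : w 0 = 0) (h0' : w' 0 = 0)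
    (hin : ∀ t, 0 ≤ t → K ^ 2 * w t ≤ w'' t) : ∀ t, 0 ≤ t → 0 ≤ w t := by
  have hstep1 : ∀ t, 0 ≤ t → 0 ≤ w' t - K * w t := by
    have hzd : ∀ t, HasDerivAt (fun u => Real.exp (K * u) * (w' u - K * w u))
        (Real.exp (K * t) * K * (w' t - K * w t)
          + Real.exp (K * t) * (w'' t - K * w' t)) t := by
      intro t
      have he : HasDerivAt (fun u => Real.exp (K * u)) (Real.exp (K * t) * K) t := by
        exact ((Real.hasDerivAt_exp (K * t)).comp t ((hasDerivAt_id t).const_mul K)).congr_deriv (by ring)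
      exact he.mul ((hw' t).sub ((hw t).const_mul K))
    have := aux_mono _ _ hzd (fun t ht => by
      have h1 := hin t ht
      have h2 : (0:ℝ) < Real.exp (K * t) := Real.exp_pos _
      nlinarith [h2])
    intro t ht
    have h3 := this t ht
    have h2 : (0:ℝ) < Real.exp (K * t) := Real.exp_pos _
    simp [h0, h0'] at h3
    nlinarith
  have hyd : ∀ t, HasDerivAt (fun u => Real.exp (-(K * u)) * w u)
      (Real.exp (-(K * t)) * (-K) * w t + Real.exp (-(K * t)) * w' t) t := by
    intro t
    have he : HasDerivAt (fun u => Real.exp (-(K * u))) (Real.exp (-(K * t)) * (-K)) t := by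
      exact ((Real.hasDerivAt_exp (-(K * t))).comp t (((hasDerivAt_id t).const_mul K).neg)).congr_deriv (by ring : _ = Real.exp (-(K * t)) * (-K))
    exact he.mul (hw t)
  have := aux_mono _ _ hyd (fun t ht => by
    have h1 := hstep1 t ht
    have h2 : (0:ℝ) < Real.exp (-(K * t)) := Real.exp_pos _
    nlinarith)
  intro t ht
  have h3 := this t ht
  have h2 : (0:ℝ) < Real.exp (-(K * t)) := Real.exp_pos _
  simp [h0] at h3
  nlinarith

lemma aux_volterra (L α β : ℝ) (hL : 0 < L) (a p p' : ℝ → ℝ) (ha : Continuous a)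
    (hp : ∀ t, HasDerivAt p (p' t) t) (hp' : ∀ t, HasDerivAt p' (L * p t) t)
    (hp0 : p 0 = α) (hp0' : p' 0 = β)
    (hineq : ∀ t, 0 ≤ t →
      a t ≤ α + β * t + L * ∫ s in (0:ℝ)..t, ∫ r in (0:ℝ)..s, a r) :
    ∀ t, 0 ≤ t → a t ≤ p t := by
  set I1 : ℝ → ℝ := fun u => ∫ r in (0:ℝ)..u, a r with hI1def
  have hI1d : ∀ u, HasDerivAt I1 (a u) u := aux_ftc a ha
  have hI1c : Continuous I1 := aux_prim_cont a ha
  set I2 : ℝ → ℝ := fun u => ∫ s in (0:ℝ)..u, I1 s with hI2def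
  have hI2d : ∀ u, HasDerivAt I2 (I1 u) u := aux_ftc I1 hI1c
  have hwd : ∀ u, HasDerivAt (fun v => p v - (α + β * v + L * I2 v))
      (p' u - (β + L * I1 u)) u := by
    intro u
    have h2 : HasDerivAt (fun v => α + β * v + L * I2 v) (β + L * I1 u) u := by
      have : HasDerivAt (fun v => α + β * v) (β : ℝ) u := by
        simpa using ((hasDerivAt_id u).const_mul β).const_add α
      exact this.add ((hI2d u).const_mul L)
    exact (hp u).sub h2
  have hwd' : ∀ u, HasDerivAt (fun v => p' v - (β + L * I1 v))
      (L * p u - L * a u) u := by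
    intro u
    have h2 : HasDerivAt (fun v => β + L * I1 v) (L * a u) u := by
      simpa using ((hI1d u).const_mul L).const_add β
    exact (hp' u).sub h2
  have key := aux_mp (Real.sqrt L) _ _ _ hwd hwd'
    (by simp [hp0, hI2def, hI1def]) (by simp [hp0', hI1def])
    (fun t ht => by
      have hK2 : Real.sqrt L ^ 2 = L := Real.sq_sqrt hL.le
      rw [hK2]
      have h1 := hineq t ht
      nlinarith)
  intro t ht
  have h1 := hineq t ht
  have h2 := key t ht
  nlinarith

/-- First-order Taylor bounds for the blocks of the fundamental solution
`Φ = [[A,B],[C,D]]` of `Φ' = [[0,I],[M(t),0]] Φ`, `Φ(0) = I`, when `‖M(t)‖ ≤ L`: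
`‖A(t) − I‖ ≤ cosh(√L t) − 1`, `‖B(t) − tI‖ ≤ sinh(√L t)/√L − t`,
`‖D(t) − I‖ ≤ cosh(√L t) − 1`. -/
theorem matrix_exponent_block_taylor_bounds (d : ℕ) (L : ℝ) (hL : 0 < L)
    (M : ℝ → EuclideanSpace ℝ (Fin d) →L[ℝ] EuclideanSpace ℝ (Fin d))
    (hMcont : Continuous M) (hM : ∀ t, 0 ≤ t → ‖M t‖ ≤ L)
    (A B C D : ℝ → EuclideanSpace ℝ (Fin d) →L[ℝ] EuclideanSpace ℝ (Fin d))
    (hA0 : A 0 = ContinuousLinearMap.id ℝ (EuclideanSpace ℝ (Fin d)))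
    (hB0 : B 0 = 0) (hC0 : C 0 = 0)
    (hD0 : D 0 = ContinuousLinearMap.id ℝ (EuclideanSpace ℝ (Fin d)))
    (hA : ∀ t, 0 ≤ t → HasDerivAt A (C t) t)
    (hB : ∀ t, 0 ≤ t → HasDerivAt B (D t) t)
    (hC : ∀ t, 0 ≤ t → HasDerivAt C ((M t).comp (A t)) t)
    (hD : ∀ t, 0 ≤ t → HasDerivAt D ((M t).comp (B t)) t)
    (t : ℝ) (ht : 0 ≤ t) :
    ‖A t - ContinuousLinearMap.id ℝ (EuclideanSpace ℝ (Fin d))‖ ≤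
        Real.cosh (Real.sqrt L * t) - 1 ∧
      ‖B t - t • ContinuousLinearMap.id ℝ (EuclideanSpace ℝ (Fin d))‖ ≤
        Real.sinh (Real.sqrt L * t) / Real.sqrt L - t ∧
      ‖D t - ContinuousLinearMap.id ℝ (EuclideanSpace ℝ (Fin d))‖ ≤
        Real.cosh (Real.sqrt L * t) - 1 := by
  set E := EuclideanSpace ℝ (Fin d)
  set Id := ContinuousLinearMap.id ℝ E with hIddef
  set K := Real.sqrt L with hKdef
  have hKpos : 0 < K := Real.sqrt_pos.2 hL
  have hK2 : K * K = L := Real.mul_self_sqrt hL.le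
  -- derivative helpers
  have hcoshd : ∀ u : ℝ, HasDerivAt (fun v => Real.cosh (K * v)) (K * Real.sinh (K * u)) u := by
    intro u
    have h : HasDerivAt (fun v => Real.cosh (K * v)) (Real.sinh (K * u) * (K * 1)) u :=
      ((hasDerivAt_id u).const_mul K).cosh
    simpa [mul_comm] using h
  have hsinhd : ∀ u : ℝ, HasDerivAt (fun v => Real.sinh (K * v)) (K * Real.cosh (K * u)) u := by
    intro u
    have h : HasDerivAt (fun v => Real.sinh (K * v)) (Real.cosh (K * u) * (K * 1)) u :=
      ((hasDerivAt_id u).const_mul K).sinh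
    simpa [mul_comm] using h
  have hsinhdivd : ∀ u : ℝ,
      HasDerivAt (fun v => Real.sinh (K * v) / K) (Real.cosh (K * u)) u := by
    intro u
    have := (hsinhd u).div_const K
    exact this.congr_deriv (mul_div_cancel_left₀ _ hKpos.ne')
  -- integral values
  have hint_cosh : ∀ s : ℝ, ∫ r in (0:ℝ)..s, Real.cosh (K * r) = Real.sinh (K * s) / K := by
    intro s
    rw [intervalIntegral.integral_eq_sub_of_hasDerivAt (fun r _ => hsinhdivd r)
      ((Real.continuous_cosh.comp (continuous_const.mul continuous_id)).intervalIntegrable _ _)]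
    simp
  have hint_Ksinh : ∀ s : ℝ, ∫ r in (0:ℝ)..s, K * Real.sinh (K * r) = Real.cosh (K * s) - 1 := by
    intro s
    rw [intervalIntegral.integral_eq_sub_of_hasDerivAt (fun r _ => hcoshd r)
      ((continuous_const.mul (Real.continuous_sinh.comp
        (continuous_const.mul continuous_id))).intervalIntegrable _ _)]
    simp
  have hint_coshm1 : ∀ s : ℝ,
      ∫ r in (0:ℝ)..s, (Real.cosh (K * r) - 1) = Real.sinh (K * s) / K - s := by
    intro s
    have hd : ∀ r ∈ Set.uIcc (0:ℝ) s,
        HasDerivAt (fun v => Real.sinh (K * v) / K - v) (Real.cosh (K * r) - 1) r := by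
      intro r _
      exact (hsinhdivd r).sub (hasDerivAt_id r)
    rw [intervalIntegral.integral_eq_sub_of_hasDerivAt hd
      (((Real.continuous_cosh.comp (continuous_const.mul continuous_id)).sub
        continuous_const).intervalIntegrable _ _)]
    simp
  -- continuity of the blocks on [0, T]
  have hAco : ∀ T : ℝ, 0 ≤ T → ContinuousOn A (Set.uIcc 0 T) := by
    intro T hT; rw [Set.uIcc_of_le hT]
    exact fun x hx => (hA x hx.1).continuousAt.continuousWithinAt
  have hBco : ∀ T : ℝ, 0 ≤ T → ContinuousOn B (Set.uIcc 0 T) := by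
    intro T hT; rw [Set.uIcc_of_le hT]
    exact fun x hx => (hB x hx.1).continuousAt.continuousWithinAt
  have hCco : ∀ T : ℝ, 0 ≤ T → ContinuousOn C (Set.uIcc 0 T) := by
    intro T hT; rw [Set.uIcc_of_le hT]
    exact fun x hx => (hC x hx.1).continuousAt.continuousWithinAt
  have hDco : ∀ T : ℝ, 0 ≤ T → ContinuousOn D (Set.uIcc 0 T) := by
    intro T hT; rw [Set.uIcc_of_le hT]
    exact fun x hx => (hD x hx.1).continuousAt.continuousWithinAt
  have hMAco : ∀ T : ℝ, 0 ≤ T → ContinuousOn (fun r => (M r).comp (A r)) (Set.uIcc 0 T) :=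
    fun T hT => (hMcont.continuousOn).clm_comp (hAco T hT)
  have hMBco : ∀ T : ℝ, 0 ≤ T → ContinuousOn (fun r => (M r).comp (B r)) (Set.uIcc 0 T) :=
    fun T hT => (hMcont.continuousOn).clm_comp (hBco T hT)
  -- FTC equalities
  have hCeq : ∀ s : ℝ, 0 ≤ s → C s = ∫ r in (0:ℝ)..s, (M r).comp (A r) := by
    intro s hs
    rw [intervalIntegral.integral_eq_sub_of_hasDerivAt
      (f := C) (f' := fun r => (M r).comp (A r))
      (fun x hx => hC x (by rw [Set.uIcc_of_le hs] at hx; exact hx.1))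
      ((hMAco s hs).intervalIntegrable), hC0, sub_zero]
  have hAeq : ∀ s : ℝ, 0 ≤ s → A s - A 0 = ∫ r in (0:ℝ)..s, C r := by
    intro s hs
    rw [intervalIntegral.integral_eq_sub_of_hasDerivAt
      (fun x hx => hA x (by rw [Set.uIcc_of_le hs] at hx; exact hx.1))
      ((hCco s hs).intervalIntegrable)]
  have hBeq : ∀ s : ℝ, 0 ≤ s → B s = ∫ r in (0:ℝ)..s, D r := by
    intro s hs
    rw [intervalIntegral.integral_eq_sub_of_hasDerivAt
      (fun x hx => hB x (by rw [Set.uIcc_of_le hs] at hx; exact hx.1))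
      ((hDco s hs).intervalIntegrable), hB0, sub_zero]
  have hDeq : ∀ s : ℝ, 0 ≤ s → D s - Id = ∫ r in (0:ℝ)..s, (M r).comp (B r) := by
    intro s hs
    rw [intervalIntegral.integral_eq_sub_of_hasDerivAt
      (fun x hx => hD x (by rw [Set.uIcc_of_le hs] at hx; exact hx.1))
      ((hMBco s hs).intervalIntegrable), hD0]
  -- globally continuous norm functions
  set na : ℝ → ℝ := fun s => ‖A (max s 0)‖ with hnadef
  set nb : ℝ → ℝ := fun s => ‖B (max s 0)‖ with hnbdef
  have hmaxc : Continuous fun s : ℝ => max s 0 := continuous_id.max continuous_const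
  have hnac : Continuous na := by
    rw [continuous_iff_continuousAt]
    intro s
    have h1 : ContinuousAt A (max s 0) := (hA _ (le_max_right s 0)).continuousAt
    have h2 : ContinuousAt (fun s : ℝ => max s 0) s := hmaxc.continuousAt
    have h3 : ContinuousAt (A ∘ fun s : ℝ => max s 0) s := ContinuousAt.comp h1 h2
    exact ContinuousAt.norm h3
  have hnbc : Continuous nb := by
    rw [continuous_iff_continuousAt]
    intro s
    have h1 : ContinuousAt B (max s 0) := (hB _ (le_max_right s 0)).continuousAt
    have h2 : ContinuousAt (fun s : ℝ => max s 0) s := hmaxc.continuousAt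
    have h3 : ContinuousAt (B ∘ fun s : ℝ => max s 0) s := ContinuousAt.comp h1 h2
    exact ContinuousAt.norm h3
  have hnaeq : ∀ s : ℝ, 0 ≤ s → na s = ‖A s‖ := by
    intro s hs; show ‖A (max s 0)‖ = ‖A s‖; rw [max_eq_left hs]
  have hnbeq : ∀ s : ℝ, 0 ≤ s → nb s = ‖B s‖ := by
    intro s hs; show ‖B (max s 0)‖ = ‖B s‖; rw [max_eq_left hs]
  -- bound on ‖C s‖
  have hCnorm : ∀ s : ℝ, 0 ≤ s → ‖C s‖ ≤ L * ∫ r in (0:ℝ)..s, na r := by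
    intro s hs
    rw [hCeq s hs]
    calc ‖∫ r in (0:ℝ)..s, (M r).comp (A r)‖
        ≤ ∫ r in (0:ℝ)..s, ‖(M r).comp (A r)‖ :=
          intervalIntegral.norm_integral_le_integral_norm hs
      _ ≤ ∫ r in (0:ℝ)..s, L * na r := by
          apply intervalIntegral.integral_mono_on hs
            ((hMAco s hs).norm.intervalIntegrable)
            ((continuous_const.mul hnac).intervalIntegrable _ _)
          intro r hr
          calc ‖(M r).comp (A r)‖ ≤ ‖M r‖ * ‖A r‖ := ContinuousLinearMap.opNorm_comp_le _ _
            _ ≤ L * na r := by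
                rw [hnaeq r hr.1]
                exact mul_le_mul_of_nonneg_right (hM r hr.1) (norm_nonneg _)
      _ = L * ∫ r in (0:ℝ)..s, na r := intervalIntegral.integral_const_mul _ _
  -- Volterra inequality for na
  have hna_ineq : ∀ s : ℝ, 0 ≤ s →
      na s ≤ 1 + 0 * s + L * ∫ u in (0:ℝ)..s, ∫ r in (0:ℝ)..u, na r := by
    intro s hs
    have h1 : na s ≤ ‖A 0‖ + ‖A s - A 0‖ := by
      rw [hnaeq s hs]
      calc ‖A s‖ = ‖A 0 + (A s - A 0)‖ := by rw [add_sub_cancel]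
        _ ≤ ‖A 0‖ + ‖A s - A 0‖ := norm_add_le _ _
    have hA0n : ‖A 0‖ ≤ 1 := by rw [hA0]; exact ContinuousLinearMap.norm_id_le
    have h2 : ‖A s - A 0‖ ≤ L * ∫ u in (0:ℝ)..s, ∫ r in (0:ℝ)..u, na r := by
      rw [hAeq s hs]
      calc ‖∫ r in (0:ℝ)..s, C r‖ ≤ ∫ r in (0:ℝ)..s, ‖C r‖ :=
            intervalIntegral.norm_integral_le_integral_norm hs
        _ ≤ ∫ u in (0:ℝ)..s, L * ∫ r in (0:ℝ)..u, na r := by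
            apply intervalIntegral.integral_mono_on hs
              ((hCco s hs).norm.intervalIntegrable)
              ((continuous_const.mul (aux_prim_cont na hnac)).intervalIntegrable _ _)
            exact fun r hr => hCnorm r hr.1
        _ = L * ∫ u in (0:ℝ)..s, ∫ r in (0:ℝ)..u, na r :=
            intervalIntegral.integral_const_mul _ _
    linarith
  -- cosh bound for ‖A‖
  have hnaP : ∀ s, 0 ≤ s → na s ≤ Real.cosh (K * s) := by
    apply aux_volterra L 1 0 hL na (fun u => Real.cosh (K * u))
      (fun u => K * Real.sinh (K * u)) hnac hcoshd ?_ (by simp) (by simp) hna_ineq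
    intro u
    have := (hsinhd u).const_mul K
    exact this.congr_deriv (by rw [← hK2]; ring)
  -- bound ‖C s‖ ≤ K sinh (K s)
  have hCbound : ∀ s, 0 ≤ s → ‖C s‖ ≤ K * Real.sinh (K * s) := by
    intro s hs
    have h2 : ∫ r in (0:ℝ)..s, na r ≤ ∫ r in (0:ℝ)..s, Real.cosh (K * r) := by
      apply intervalIntegral.integral_mono_on hs (hnac.intervalIntegrable _ _)
        ((Real.continuous_cosh.comp (continuous_const.mul continuous_id)).intervalIntegrable _ _)
      exact fun r hr => hnaP r hr.1
    rw [hint_cosh s] at h2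
    calc ‖C s‖ ≤ L * ∫ r in (0:ℝ)..s, na r := hCnorm s hs
      _ ≤ L * (Real.sinh (K * s) / K) := mul_le_mul_of_nonneg_left h2 hL.le
      _ = K * Real.sinh (K * s) := by rw [← hK2]; field_simp
  -- bound on ‖D s‖ and Volterra inequality for nb
  have hDnormI : ∀ s : ℝ, 0 ≤ s → ‖D s - Id‖ ≤ L * ∫ r in (0:ℝ)..s, nb r := by
    intro s hs
    rw [hDeq s hs]
    calc ‖∫ r in (0:ℝ)..s, (M r).comp (B r)‖
        ≤ ∫ r in (0:ℝ)..s, ‖(M r).comp (B r)‖ :=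
          intervalIntegral.norm_integral_le_integral_norm hs
      _ ≤ ∫ r in (0:ℝ)..s, L * nb r := by
          apply intervalIntegral.integral_mono_on hs
            ((hMBco s hs).norm.intervalIntegrable)
            ((continuous_const.mul hnbc).intervalIntegrable _ _)
          intro r hr
          calc ‖(M r).comp (B r)‖ ≤ ‖M r‖ * ‖B r‖ := ContinuousLinearMap.opNorm_comp_le _ _
            _ ≤ L * nb r := by
                rw [hnbeq r hr.1]
                exact mul_le_mul_of_nonneg_right (hM r hr.1) (norm_nonneg _)
      _ = L * ∫ r in (0:ℝ)..s, nb r := intervalIntegral.integral_const_mul _ _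
  have hDnorm : ∀ s : ℝ, 0 ≤ s → ‖D s‖ ≤ 1 + L * ∫ r in (0:ℝ)..s, nb r := by
    intro s hs
    have h1 : ‖D s‖ ≤ ‖Id‖ + ‖D s - Id‖ := by
      calc ‖D s‖ = ‖Id + (D s - Id)‖ := by rw [add_sub_cancel]
        _ ≤ ‖Id‖ + ‖D s - Id‖ := norm_add_le _ _
    have hIdn : ‖Id‖ ≤ 1 := ContinuousLinearMap.norm_id_le
    have h2 := hDnormI s hs
    linarith
  have hnb_ineq : ∀ s : ℝ, 0 ≤ s →
      nb s ≤ 0 + 1 * s + L * ∫ u in (0:ℝ)..s, ∫ r in (0:ℝ)..u, nb r := by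
    intro s hs
    rw [hnbeq s hs, hBeq s hs]
    have hprim : Continuous fun u => L * ∫ r in (0:ℝ)..u, nb r :=
      continuous_const.mul (aux_prim_cont nb hnbc)
    calc ‖∫ r in (0:ℝ)..s, D r‖ ≤ ∫ r in (0:ℝ)..s, ‖D r‖ :=
          intervalIntegral.norm_integral_le_integral_norm hs
      _ ≤ ∫ u in (0:ℝ)..s, (1 + L * ∫ r in (0:ℝ)..u, nb r) := by
          apply intervalIntegral.integral_mono_on hs
            ((hDco s hs).norm.intervalIntegrable)
            ((continuous_const.add hprim).intervalIntegrable _ _)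
          exact fun r hr => hDnorm r hr.1
      _ = 0 + 1 * s + L * ∫ u in (0:ℝ)..s, ∫ r in (0:ℝ)..u, nb r := by
          rw [intervalIntegral.integral_add (intervalIntegrable_const)
            (hprim.intervalIntegrable _ _), intervalIntegral.integral_const_mul,
            intervalIntegral.integral_const]
          simp
  -- sinh bound for ‖B‖
  have hnbP : ∀ s, 0 ≤ s → nb s ≤ Real.sinh (K * s) / K := by
    apply aux_volterra L 0 1 hL nb (fun u => Real.sinh (K * u) / K)
      (fun u => Real.cosh (K * u)) hnbc hsinhdivd ?_ (by simp) (by simp) hnb_ineq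
    intro u
    have := hcoshd u
    convert this using 1
    rw [← hK2]; field_simp
  -- Taylor bound for D (for all s ≥ 0)
  have hDtay : ∀ s : ℝ, 0 ≤ s → ‖D s - Id‖ ≤ Real.cosh (K * s) - 1 := by
    intro s hs
    have h2 : ∫ r in (0:ℝ)..s, nb r ≤ ∫ r in (0:ℝ)..s, Real.sinh (K * r) / K := by
      apply intervalIntegral.integral_mono_on hs (hnbc.intervalIntegrable _ _)
        (((Real.continuous_sinh.comp (continuous_const.mul continuous_id)).div_const
          K).intervalIntegrable _ _)
      exact fun r hr => hnbP r hr.1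
    calc ‖D s - Id‖ ≤ L * ∫ r in (0:ℝ)..s, nb r := hDnormI s hs
      _ ≤ L * ∫ r in (0:ℝ)..s, Real.sinh (K * r) / K := mul_le_mul_of_nonneg_left h2 hL.le
      _ = ∫ r in (0:ℝ)..s, K * Real.sinh (K * r) := by
          rw [← intervalIntegral.integral_const_mul]
          apply intervalIntegral.integral_congr
          intro r _
          rw [← hK2]; field_simp
      _ = Real.cosh (K * s) - 1 := hint_Ksinh s
  -- Taylor bound for A
  have hAtay : ‖A t - Id‖ ≤ Real.cosh (K * t) - 1 := by
    have he : A t - Id = ∫ r in (0:ℝ)..t, C r := by rw [← hA0]; exact hAeq t ht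
    rw [he]
    calc ‖∫ r in (0:ℝ)..t, C r‖ ≤ ∫ r in (0:ℝ)..t, ‖C r‖ :=
          intervalIntegral.norm_integral_le_integral_norm ht
      _ ≤ ∫ r in (0:ℝ)..t, K * Real.sinh (K * r) := by
          apply intervalIntegral.integral_mono_on ht
            ((hCco t ht).norm.intervalIntegrable)
            ((continuous_const.mul (Real.continuous_sinh.comp
              (continuous_const.mul continuous_id))).intervalIntegrable _ _)
          exact fun r hr => hCbound r hr.1
      _ = Real.cosh (K * t) - 1 := hint_Ksinh t
  -- Taylor bound for B
  have hBtay : ‖B t - t • Id‖ ≤ Real.sinh (K * t) / K - t := by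
    have hGd : ∀ x ∈ Set.uIcc (0:ℝ) t, HasDerivAt (fun s => B s - s • Id) (D x - Id) x := by
      intro x hx
      rw [Set.uIcc_of_le ht] at hx
      have h2 : HasDerivAt (fun v : ℝ => v • Id) Id x := by
        simpa using (hasDerivAt_id x).smul_const Id
      exact (hB x hx.1).sub h2
    have he : B t - t • Id = ∫ s in (0:ℝ)..t, (D s - Id) := by
      have h := intervalIntegral.integral_eq_sub_of_hasDerivAt hGd
        (((hDco t ht).sub continuousOn_const).intervalIntegrable)
      rw [h]
      simp only [hB0]
      rw [show (0:ℝ) • Id = 0 from zero_smul ℝ Id]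
      simp
    rw [he]
    calc ‖∫ s in (0:ℝ)..t, (D s - Id)‖ ≤ ∫ s in (0:ℝ)..t, ‖D s - Id‖ :=
          intervalIntegral.norm_integral_le_integral_norm ht
      _ ≤ ∫ s in (0:ℝ)..t, (Real.cosh (K * s) - 1) := by
          apply intervalIntegral.integral_mono_on ht
            (((hDco t ht).sub continuousOn_const).norm.intervalIntegrable)
            (((Real.continuous_cosh.comp (continuous_const.mul continuous_id)).sub
              continuous_const).intervalIntegrable _ _)
          exact fun s hs => hDtay s hs.1
      _ = Real.sinh (K * t) / K - t := hint_coshm1 t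
  exact ⟨hAtay, hBtay, hDtay t ht⟩
end
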